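/- Equality of induced hamiltonian derivations: let P ∈ ℂ[[X₁,…,Xₙ]] and set gᵢ(λ) = (∂P/∂Xᵢ)(λ₁,…,λₙ) ∈ ℂ[[λ]]. Then for every F ∈ ℂ[[λ,q,p]], {F, P(q₁p₁,…,qₙpₙ)} − {F, Σᵢ₌₁ⁿ gᵢ(λ)·(qᵢpᵢ − λᵢ)} ∈ I, where I is the ideal generated by q₁p₁−λ₁,…,qₙpₙ−λₙ; that is, the two hamiltonian derivations coincide as derivations of ℂ[[λ,q,p]]/I. -/

import Mathlib

/- ℂ[[λ,q,p]] is `MvPowerSeries (Fin n ⊕ (Fin n ⊕ Fin n)) ℂ`, where `Sum.inl i` is the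
variable `λᵢ`, `Sum.inr (Sum.inl i)` is `qᵢ` and `Sum.inr (Sum.inr i)` is `pᵢ`.
ℂ[[q,p]] is `MvPowerSeries (Fin n ⊕ Fin n) ℂ` (`Sum.inl i` is `qᵢ`, `Sum.inr i` is `pᵢ`). -/

open MvPowerSeries
open scoped Classical

/-- Partial derivative of a multivariate formal power series. -/
noncomputable def pd {σ : Type} [DecidableEq σ] (x : σ) (f : MvPowerSeries σ ℂ) :
    MvPowerSeries σ ℂ :=
  fun m => ((m x : ℂ) + 1) * coeff (m + Finsupp.single x 1) f

/-- Total degree of a monomial. -/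
def mdeg {σ : Type} (m : σ →₀ ℕ) : ℕ := m.sum fun _ k => k

/-- `f` has order ≥ `a`: every monomial of `f` has total degree ≥ `a`. -/
def OrdGe {σ : Type} (f : MvPowerSeries σ ℂ) (a : ℕ) : Prop :=
  ∀ m, mdeg m < a → coeff m f = 0

/-- The Poisson bracket on ℂ[[q,p]]. -/
noncomputable def pois {n : ℕ} (f g : MvPowerSeries (Fin n ⊕ Fin n) ℂ) :
    MvPowerSeries (Fin n ⊕ Fin n) ℂ :=
  ∑ i : Fin n, (pd (Sum.inl i) f * pd (Sum.inr i) g - pd (Sum.inr i) f * pd (Sum.inl i) g)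

/-- The ℂ[[λ]]-linear Poisson bracket on ℂ[[λ,q,p]] (the `λᵢ` are constants):
`{f,g} = Σᵢ ∂_{qᵢ}f ∂_{pᵢ}g − ∂_{pᵢ}f ∂_{qᵢ}g`. -/
noncomputable def pois3 {n : ℕ} (f g : MvPowerSeries (Fin n ⊕ (Fin n ⊕ Fin n)) ℂ) :
    MvPowerSeries (Fin n ⊕ (Fin n ⊕ Fin n)) ℂ :=
  ∑ i : Fin n,
    (pd (Sum.inr (Sum.inl i)) f * pd (Sum.inr (Sum.inr i)) g -
      pd (Sum.inr (Sum.inr i)) f * pd (Sum.inr (Sum.inl i)) g)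

/-- The ideal `I ⊂ ℂ[[λ,q,p]]` generated by `q₁p₁−λ₁, …, qₙpₙ−λₙ`. -/
noncomputable def pqIdeal (n : ℕ) : Ideal (MvPowerSeries (Fin n ⊕ (Fin n ⊕ Fin n)) ℂ) :=
  Ideal.span (Set.range fun i : Fin n =>
    X (Sum.inr (Sum.inl i)) * X (Sum.inr (Sum.inr i)) - X (Sum.inl i))

/-- Substitution `P(λ₁,…,λₙ) ∈ ℂ[[λ,q,p]]` of the variables `λᵢ` into a formal power
series `P ∈ ℂ[[X₁,…,Xₙ]]` (the continuous algebra map sending `Xᵢ` to `λᵢ`). -/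
noncomputable def substL {n : ℕ} (P : MvPowerSeries (Fin n) ℂ) :
    MvPowerSeries (Fin n ⊕ (Fin n ⊕ Fin n)) ℂ :=
  fun m => if ∀ v : Fin n ⊕ Fin n, m (Sum.inr v) = 0 then
    coeff (Finsupp.comapDomain Sum.inl m Sum.inl_injective.injOn) P else 0

/-- Substitution `P(q₁p₁,…,qₙpₙ) ∈ ℂ[[λ,q,p]]` of the products `qᵢpᵢ` into a formal
power series `P ∈ ℂ[[X₁,…,Xₙ]]`: since `P(q₁p₁,…,qₙpₙ) = Σ_d (coeff_d P) q^d p^d`,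
its coefficient on `λ^a q^I p^J` is `coeff_I P` if `a = 0` and `I = J`, and `0` otherwise. -/
noncomputable def substQP3 {n : ℕ} (P : MvPowerSeries (Fin n) ℂ) :
    MvPowerSeries (Fin n ⊕ (Fin n ⊕ Fin n)) ℂ :=
  fun m => if (∀ i : Fin n, m (Sum.inl i) = 0) ∧
      (∀ i : Fin n, m (Sum.inr (Sum.inl i)) = m (Sum.inr (Sum.inr i))) then
    coeff (Finsupp.comapDomain (fun i : Fin n => Sum.inr (Sum.inl i)) m
      ((Sum.inr_injective.comp Sum.inl_injective).injOn)) P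
  else 0

/-! The hamiltonian vector fields are computed by the chain rule:
`∂_{qⱼ} P(q₁p₁,…,qₙpₙ) = (∂ⱼP)(q₁p₁,…,qₙpₙ)·pⱼ`, while `∂_{qⱼ} Σᵢ gᵢ(λ)(qᵢpᵢ − λᵢ) = gⱼ(λ)·pⱼ`
because the `gᵢ(λ)` are constants for `q` and `p` (likewise for `pⱼ`). So the two brackets differ
by a combination of the differences `Q(q₁p₁,…,qₙpₙ) − Q(λ₁,…,λₙ)` with `Q = ∂ⱼP`, and it remains
to see that `Q(a) − Q(b)` lies in the ideal generated by the `aᵢ − bᵢ`. This follows from the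
universal case: `Q(Y + D) − Q(Y)` vanishes at `D = 0`, so it has no monomial free of the `Dᵢ` and
lies in `(D₁,…,Dₙ)`; now substitute `Y = b`, `D = a − b`. -/

namespace MvPowerSeries

variable {σ τ R : Type*} [CommRing R]

theorem mem_span_X_image_of_coeff_eq_zero (S : Finset τ) {f : MvPowerSeries τ R}
    (hf : ∀ m : τ →₀ ℕ, (∀ s ∈ S, m s = 0) → coeff m f = 0) :
    f ∈ Ideal.span (X '' (S : Set τ)) := by
  induction S using Finset.induction_on generalizing f with
  | empty =>
    convert Ideal.zero_mem _
    ext m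
    simpa using hf m
  | insert s S _ ih =>
    let g : MvPowerSeries τ R := fun m => if m s = 0 then coeff m f else 0
    have hg : g ∈ Ideal.span (X '' (S : Set τ)) := ih fun m hm => by
      by_cases hms : m s = 0
      · exact (if_pos hms).trans (hf m (by simpa [hms] using hm))
      · exact if_neg hms
    obtain ⟨h, hfg⟩ : X s ∣ f - g := X_dvd_iff.2 fun m hms => by
      rw [map_sub, sub_eq_zero]; exact (if_pos hms).symm
    rw [← sub_add_cancel f g, hfg, Finset.coe_insert]
    exact Ideal.add_mem _ (Ideal.mul_mem_right _ _ (Ideal.subset_span ⟨s, by simp, rfl⟩))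
      (Ideal.span_mono (Set.image_mono (Set.subset_insert _ _)) hg)

open WithPiTopology in
theorem continuous_killCompl [TopologicalSpace R] (e : σ ↪ τ) :
    Continuous (killCompl (R := R) e) :=
  continuous_pi fun x => continuous_apply (Finsupp.embDomain e x)

open WithPiTopology in
theorem killCompl_subst (e : σ ↪ τ) {a : σ → MvPowerSeries τ R}
    (ha : HasSubst a) (h : ∀ s, killCompl e (a s) = X s) (f : MvPowerSeries σ R) :
    killCompl e (subst a f) = f := by
  let : UniformSpace R := ⊥
  have hKa : (fun s => (killCompl e).toRingHom (a s)) = X := funext h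
  rw [comp_subst_apply ha (continuous_killCompl e), coe_aeval, hKa,
    ← subst_eq_eval₂, subst_self, id_eq]

theorem subst_X_add_X_sub_rename_mem_span [Fintype σ] (f : MvPowerSeries σ R) :
    subst (fun i => X (Sum.inl i) + X (Sum.inr i)) f - rename Sum.inl f ∈
      Ideal.span (Set.range fun i : σ => (X (Sum.inr i) : MvPowerSeries (σ ⊕ σ) R)) := by
  have hS : Set.range (fun i : σ => (X (Sum.inr i) : MvPowerSeries (σ ⊕ σ) R)) =
      X '' ((Finset.univ.image Sum.inr : Finset (σ ⊕ σ)) : Set (σ ⊕ σ)) := by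
    ext; simp
  rw [hS]
  refine mem_span_X_image_of_coeff_eq_zero _ fun m hm => ?_
  obtain ⟨d, rfl⟩ : m ∈ Set.range (Finsupp.embDomain (Function.Embedding.inl : σ ↪ σ ⊕ σ)) := by
    rw [Finsupp.mem_range_embDomain_iff]
    intro x hx
    rcases x with i | i
    · exact ⟨i, rfl⟩
    · exact absurd (hm _ (by simp)) (Finsupp.mem_support_iff.1 hx)
  have ha : HasSubst (fun i => (X (Sum.inl i) + X (Sum.inr i) : MvPowerSeries (σ ⊕ σ) R)) :=
    hasSubst_of_constantCoeff_zero fun i => by simp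
  rw [← coeff_killCompl, map_sub, killCompl_subst _ ha, sub_eq_zero.2, map_zero]
  · exact (killCompl_rename_app (e := Function.Embedding.inl) f).symm
  · intro i
    rw [map_add, killCompl_X_eq_zero (t := Sum.inr i) (by simp), add_zero]
    exact killCompl_X (e := Function.Embedding.inl) i

theorem subst_sub_subst_mem_span [Fintype σ] {a b : σ → MvPowerSeries τ R} (ha : HasSubst a)
    (hb : HasSubst b) (f : MvPowerSeries σ R) :
    subst a f - subst b f ∈ Ideal.span (Set.range fun i => a i - b i) := by
  let c : σ ⊕ σ → MvPowerSeries τ R := Sum.elim b fun i => a i - b i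
  have hc : HasSubst c := hasSubst_of_constantCoeff_nilpotent fun s => by
    rcases s with i | i
    · exact hb.const_coeff i
    · simpa [c] using
        Commute.isNilpotent_sub (Commute.all _ _) (ha.const_coeff i) (hb.const_coeff i)
  have hX : HasSubst (fun i => (X (Sum.inl i) + X (Sum.inr i) : MvPowerSeries (σ ⊕ σ) R)) :=
    hasSubst_of_constantCoeff_zero fun i => by simp
  have key := Ideal.mem_map_of_mem (substAlgHom hc) (subst_X_add_X_sub_rename_mem_span f)
  rw [Ideal.map_span, ← Set.range_comp, map_sub, substAlgHom_apply, substAlgHom_apply,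
    subst_comp_subst_apply hX hc, rename_eq_subst, subst_comp_subst_apply (HasSubst.X_comp _) hc]
    at key
  simpa [subst_add hc, subst_X hc, Function.comp_def, c] using key

theorem pderiv_rename_of_notMem_range {f : σ → τ} [Filter.TendstoCofinite f] {x : τ}
    (hx : x ∉ Set.range f) (g : MvPowerSeries σ R) : pderiv R x (rename f g) = 0 := by
  ext m
  rw [coeff_pderiv, coeff_rename_eq_zero, zero_mul, map_zero]
  rintro ⟨d, hd⟩
  have := congrArg (· x) hd
  simp [Finsupp.mapDomain_of_notMem_range _ _ hx] at this

section Paired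

variable (u v : σ → τ)

noncomputable def pairedExponent (d : σ →₀ ℕ) : τ →₀ ℕ := d.mapDomain u + d.mapDomain v

variable {u v}

theorem pairedExponent_add_single (d : σ →₀ ℕ) (j : σ) :
    pairedExponent u v (d + Finsupp.single j 1) =
      pairedExponent u v d + Finsupp.single (u j) 1 + Finsupp.single (v j) 1 := by
  simp only [pairedExponent, Finsupp.mapDomain_add, Finsupp.mapDomain_single]
  rw [add_add_add_comm, ← add_assoc]

theorem pairedExponent_comm : pairedExponent u v = pairedExponent v u := by
  ext1 d; exact add_comm _ _

theorem pairedExponent_apply_left (hu : u.Injective) (huv : ∀ i j, u i ≠ v j) (d : σ →₀ ℕ)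
    (i : σ) : pairedExponent u v d (u i) = d i := by
  rw [pairedExponent, Finsupp.add_apply, Finsupp.mapDomain_apply hu,
    Finsupp.mapDomain_of_notMem_range _ _ (by rintro ⟨j, hj⟩; exact huv i j hj.symm), add_zero]

theorem pairedExponent_apply_right (hv : v.Injective) (huv : ∀ i j, u i ≠ v j) (d : σ →₀ ℕ)
    (i : σ) : pairedExponent u v d (v i) = d i := by
  rw [pairedExponent_comm]
  exact pairedExponent_apply_left hv (fun i j => (huv j i).symm) d i

theorem pairedExponent_injective (hu : u.Injective) (huv : ∀ i j, u i ≠ v j) :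
    (pairedExponent u v).Injective := fun d d' h => by
  ext i
  rw [← pairedExponent_apply_left hu huv, h, pairedExponent_apply_left hu huv]

theorem prod_X_mul_X_pow (d : σ →₀ ℕ) :
    d.prod (fun s e => (X (u s) * X (v s) : MvPowerSeries τ R) ^ e) =
      monomial (pairedExponent u v d) 1 := by
  induction d using Finsupp.induction_linear with
  | zero => simp [pairedExponent, monomial_zero_one]
  | add d₁ d₂ h₁ h₂ =>
    rw [Finsupp.prod_add_index' (by simp) (fun _ _ _ => pow_add _ _ _), h₁, h₂,
      monomial_mul_monomial, one_mul]
    simp only [pairedExponent, Finsupp.mapDomain_add, add_add_add_comm]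
  | single s e =>
    rw [Finsupp.prod_single_index (by simp), mul_pow, X_pow_eq, X_pow_eq,
      monomial_mul_monomial, one_mul]
    simp [pairedExponent, Finsupp.mapDomain_single]

variable [Finite σ]

theorem hasSubst_X_mul_X : HasSubst (fun s => (X (u s) * X (v s) : MvPowerSeries τ R)) :=
  hasSubst_of_constantCoeff_zero fun s => by simp

theorem coeff_subst_X_mul_X (f : MvPowerSeries σ R) (m : τ →₀ ℕ) :
    coeff m (subst (fun s => (X (u s) * X (v s) : MvPowerSeries τ R)) f) =
      finsum fun d => coeff d f • (if m = pairedExponent u v d then (1 : R) else 0) := by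
  simp_rw [coeff_subst hasSubst_X_mul_X, prod_X_mul_X_pow, coeff_monomial]

theorem coeff_pairedExponent_subst_X_mul_X (hu : u.Injective) (huv : ∀ i j, u i ≠ v j)
    (f : MvPowerSeries σ R) (d : σ →₀ ℕ) :
    coeff (pairedExponent u v d) (subst (fun s => (X (u s) * X (v s) : MvPowerSeries τ R)) f) =
      coeff d f := by
  rw [coeff_subst_X_mul_X, finsum_eq_single _ d, if_pos rfl, smul_eq_mul, mul_one]
  intro d' hd'
  rw [if_neg ((pairedExponent_injective hu huv).ne hd').symm, smul_zero]

theorem coeff_subst_X_mul_X_eq_zero (f : MvPowerSeries σ R) {m : τ →₀ ℕ}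
    (hm : m ∉ Set.range (pairedExponent u v)) :
    coeff m (subst (fun s => (X (u s) * X (v s) : MvPowerSeries τ R)) f) = 0 := by
  rw [coeff_subst_X_mul_X]
  refine finsum_eq_zero_of_forall_eq_zero fun d => ?_
  rw [if_neg fun h => hm ⟨d, h.symm⟩, smul_zero]

theorem pderiv_subst_X_mul_X (hu : u.Injective) (huv : ∀ i j, u i ≠ v j) (j : σ)
    (f : MvPowerSeries σ R) :
    pderiv R (u j) (subst (fun s => (X (u s) * X (v s) : MvPowerSeries τ R)) f) =
      subst (fun s => (X (u s) * X (v s) : MvPowerSeries τ R)) (pderiv R j f) * X (v j) := by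
  ext m
  rw [coeff_pderiv, X_def, coeff_mul_monomial, mul_one]
  by_cases hm : ∃ d, m = pairedExponent u v d + Finsupp.single (v j) 1
  · obtain ⟨d, rfl⟩ := hm
    have hexp : pairedExponent u v d + Finsupp.single (v j) 1 + Finsupp.single (u j) 1 =
        pairedExponent u v (d + Finsupp.single j 1) := by
      rw [pairedExponent_add_single, add_right_comm]
    have hdeg : (pairedExponent u v d + Finsupp.single (v j) 1 : τ →₀ ℕ) (u j) = d j := by
      simp [pairedExponent_apply_left hu huv, huv]
    rw [hexp, hdeg, coeff_pairedExponent_subst_X_mul_X hu huv, if_pos le_add_self,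
      add_tsub_cancel_right, coeff_pairedExponent_subst_X_mul_X hu huv, coeff_pderiv]
  · rw [coeff_subst_X_mul_X_eq_zero, zero_mul]
    · split_ifs with hle
      · rw [coeff_subst_X_mul_X_eq_zero]
        rintro ⟨d, hd⟩
        exact hm ⟨d, by rw [hd, tsub_add_cancel_of_le hle]⟩
      · rfl
    · rintro ⟨d, hd⟩
      have hdj : 1 ≤ d j := by
        have := congrArg (· (u j)) hd
        simp only [pairedExponent_apply_left hu huv, Finsupp.add_apply,
          Finsupp.single_eq_same] at this
        omega
      obtain ⟨d', rfl⟩ : ∃ d', d = d' + Finsupp.single j 1 :=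
        ⟨d - Finsupp.single j 1, (tsub_add_cancel_of_le (Finsupp.single_le_iff.2 hdj)).symm⟩
      rw [pairedExponent_add_single, add_right_comm] at hd
      exact hm ⟨d', (add_right_cancel hd).symm⟩

end Paired

end MvPowerSeries

theorem injective_inr_inl {α β γ : Type*} :
    Function.Injective fun a : α => (Sum.inr (Sum.inl a) : γ ⊕ (α ⊕ β)) :=
  Sum.inr_injective.comp Sum.inl_injective

theorem injective_inr_inr {α β γ : Type*} :
    Function.Injective fun b : β => (Sum.inr (Sum.inr b) : γ ⊕ (α ⊕ β)) :=
  Sum.inr_injective.comp Sum.inr_injective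

theorem pd_eq_pderiv {σ : Type} [DecidableEq σ] (x : σ) (f : MvPowerSeries σ ℂ) :
    pd x f = pderiv ℂ x f := by
  ext m
  rw [coeff_pderiv, mul_comm]
  rfl

theorem pd_sub {σ : Type} [DecidableEq σ] (x : σ) (f g : MvPowerSeries σ ℂ) :
    pd x (f - g) = pd x f - pd x g := by
  simp only [pd_eq_pderiv, map_sub]

theorem substL_eq_rename {n : ℕ} (P : MvPowerSeries (Fin n) ℂ) :
    substL P = rename Sum.inl P := by
  ext m
  show substL P m = _
  unfold substL
  split_ifs with h
  · have hm : Finsupp.embDomain .inl (Finsupp.comapDomain Sum.inl m Sum.inl_injective.injOn) = m :=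
      Finsupp.embDomain_comapDomain fun x hx => by
        rcases x with i | v
        · exact ⟨i, rfl⟩
        · exact absurd (h v) (Finsupp.mem_support_iff.1 hx)
    conv_rhs => rw [← hm]
    exact (coeff_embDomain_rename _ P _).symm
  · refine (coeff_rename_eq_zero _ P fun hm => h fun v => ?_).symm
    exact (Finsupp.mem_range_mapDomain_iff _ Sum.inl_injective m).1 hm _ (by simp)

theorem substQP3_eq_subst {n : ℕ} (P : MvPowerSeries (Fin n) ℂ) :
    substQP3 P = subst (fun i => X (Sum.inr (Sum.inl i)) * X (Sum.inr (Sum.inr i))) P := by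
  have hqp : ∀ i j : Fin n, (Sum.inr (Sum.inl i) : Fin n ⊕ (Fin n ⊕ Fin n)) ≠ Sum.inr (Sum.inr j) :=
    by simp
  have hinl : ∀ d i, pairedExponent
      (fun i : Fin n => (Sum.inr (Sum.inl i) : Fin n ⊕ (Fin n ⊕ Fin n)))
      (fun i => Sum.inr (Sum.inr i)) d (Sum.inl i) = 0 := fun d i => by
    simp [pairedExponent, Finsupp.mapDomain_of_notMem_range]
  have hq := pairedExponent_apply_left injective_inr_inl hqp
  have hp := pairedExponent_apply_right injective_inr_inr hqp
  ext m
  show substQP3 P m = _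
  unfold substQP3
  by_cases hm : m ∈ Set.range (pairedExponent
      (fun i : Fin n => (Sum.inr (Sum.inl i) : Fin n ⊕ (Fin n ⊕ Fin n)))
      fun i => Sum.inr (Sum.inr i))
  · obtain ⟨d, rfl⟩ := hm
    rw [coeff_pairedExponent_subst_X_mul_X injective_inr_inl hqp, if_pos]
    · congr 2; ext k; simp [hq]
    · simp [hinl, hq, hp]
  · rw [coeff_subst_X_mul_X_eq_zero _ hm, if_neg]
    rintro ⟨hm_inl, hmqp⟩
    refine hm ⟨Finsupp.comapDomain _ m injective_inr_inl.injOn, ?_⟩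
    ext (i | i | i) <;> simp [hinl, hq, hp, hm_inl, hmqp]

theorem substQP3_sub_substL_mem_pqIdeal {n : ℕ} (Q : MvPowerSeries (Fin n) ℂ) :
    substQP3 Q - substL Q ∈ pqIdeal n := by
  rw [substQP3_eq_subst, substL_eq_rename, rename_eq_subst]
  exact subst_sub_subst_mem_span hasSubst_X_mul_X (HasSubst.X_comp _) Q

theorem pd_inr_inl_substQP3 {n : ℕ} (P : MvPowerSeries (Fin n) ℂ) (j : Fin n) :
    pd (Sum.inr (Sum.inl j)) (substQP3 P) = substQP3 (pd j P) * X (Sum.inr (Sum.inr j)) := by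
  rw [substQP3_eq_subst, substQP3_eq_subst, pd_eq_pderiv, pd_eq_pderiv,
    pderiv_subst_X_mul_X injective_inr_inl (by simp)]

theorem pd_inr_inr_substQP3 {n : ℕ} (P : MvPowerSeries (Fin n) ℂ) (j : Fin n) :
    pd (Sum.inr (Sum.inr j)) (substQP3 P) = substQP3 (pd j P) * X (Sum.inr (Sum.inl j)) := by
  have hswap : ∀ Q : MvPowerSeries (Fin n) ℂ,
      substQP3 Q = subst (fun i => X (Sum.inr (Sum.inr i)) * X (Sum.inr (Sum.inl i))) Q := by
    intro Q
    simp_rw [substQP3_eq_subst, mul_comm]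
  rw [hswap, hswap, pd_eq_pderiv, pd_eq_pderiv, pderiv_subst_X_mul_X injective_inr_inr (by simp)]

theorem pd_inr_inl_sum_substL_mul {n : ℕ} (h : Fin n → MvPowerSeries (Fin n) ℂ) (j : Fin n) :
    pd (Sum.inr (Sum.inl j)) (∑ i : Fin n, substL (h i) *
        (X (Sum.inr (Sum.inl i)) * X (Sum.inr (Sum.inr i)) - X (Sum.inl i))) =
      substL (h j) * X (Sum.inr (Sum.inr j)) := by
  simp [pd_eq_pderiv, substL_eq_rename, Derivation.leibniz, pderiv_rename_of_notMem_range,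
    pderiv_X, Pi.single_apply]

theorem pd_inr_inr_sum_substL_mul {n : ℕ} (h : Fin n → MvPowerSeries (Fin n) ℂ) (j : Fin n) :
    pd (Sum.inr (Sum.inr j)) (∑ i : Fin n, substL (h i) *
        (X (Sum.inr (Sum.inl i)) * X (Sum.inr (Sum.inr i)) - X (Sum.inl i))) =
      substL (h j) * X (Sum.inr (Sum.inl j)) := by
  simp [pd_eq_pderiv, substL_eq_rename, Derivation.leibniz, pderiv_rename_of_notMem_range,
    pderiv_X, Pi.single_apply]

theorem pois3_sub_pois3 {n : ℕ} (F G H : MvPowerSeries (Fin n ⊕ (Fin n ⊕ Fin n)) ℂ) :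
    pois3 F G - pois3 F H = pois3 F (G - H) := by
  simp only [pois3, ← Finset.sum_sub_distrib, pd_sub]
  exact Finset.sum_congr rfl fun _ _ => by ring

theorem pois3_mem_of_pd_mem {n : ℕ} {J : Ideal (MvPowerSeries (Fin n ⊕ (Fin n ⊕ Fin n)) ℂ)}
    (F : MvPowerSeries (Fin n ⊕ (Fin n ⊕ Fin n)) ℂ) {H : MvPowerSeries (Fin n ⊕ (Fin n ⊕ Fin n)) ℂ}
    (hq : ∀ j, pd (Sum.inr (Sum.inl j)) H ∈ J) (hp : ∀ j, pd (Sum.inr (Sum.inr j)) H ∈ J) :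
    pois3 F H ∈ J :=
  J.sum_mem fun j _ => J.sub_mem (J.mul_mem_left _ (hp j)) (J.mul_mem_left _ (hq j))

/-- **Equality of induced hamiltonian derivations.** For `P ∈ ℂ[[X₁,…,Xₙ]]` and
`gᵢ(λ) = (∂P/∂Xᵢ)(λ₁,…,λₙ)`, the hamiltonian derivations of `P(q₁p₁,…,qₙpₙ)` and of
`Σᵢ gᵢ(λ)(qᵢpᵢ − λᵢ)` coincide as derivations of `ℂ[[λ,q,p]]/I`:
`{F, P(q₁p₁,…,qₙpₙ)} − {F, Σᵢ gᵢ(λ)(qᵢpᵢ − λᵢ)} ∈ I` for every `F`. -/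
theorem hamiltonian_derivations_agree_mod_I (n : ℕ) (P : MvPowerSeries (Fin n) ℂ)
    (F : MvPowerSeries (Fin n ⊕ (Fin n ⊕ Fin n)) ℂ) :
    pois3 F (substQP3 P) -
      pois3 F (∑ i : Fin n, substL (pd i P) *
        (X (Sum.inr (Sum.inl i)) * X (Sum.inr (Sum.inr i)) - X (Sum.inl i)))
    ∈ pqIdeal n := by
  rw [pois3_sub_pois3]
  refine pois3_mem_of_pd_mem F (fun j => ?_) (fun j => ?_)
  · rw [pd_sub, pd_inr_inl_substQP3, pd_inr_inl_sum_substL_mul, ← sub_mul]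
    exact Ideal.mul_mem_right _ _ (substQP3_sub_substL_mem_pqIdeal _)
  · rw [pd_sub, pd_inr_inr_substQP3, pd_inr_inr_sum_substL_mul, ← sub_mul]
    exact Ideal.mul_mem_right _ _ (substQP3_sub_substL_mem_pqIdeal _)
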